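/- The map δ_{0,2} : 𝒲 → 𝓕_0 ⊗ 𝓕_2 given by δ_{0,2}(L_n) = n³ v_0 ⊗ w_n is a 1-cocycle of the Witt algebra, and it is not a 1-coboundary. -/

import Mathlib

/-!
If `δ(L_n) = L_n · u`, the coefficient of `v_0 ⊗ w_n` gives `n³ = n u(-n, n) - 2n u(0, 0)`.
Since `u` has finite support, `u(-n, n) = 0` for large `n`, so `n²` would be eventually constant.
-/

/-- The action of the Witt basis element `L m` on `𝓕_α ⊗ 𝓕_β`, realized on
`(ℤ × ℤ) →₀ ℂ` with basis `v_i ⊗ w_j ↦ single (i, j) 1`: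
`L_m · (v_i ⊗ w_j) = -(i + αm) v_{m+i} ⊗ w_j - (j + βm) v_i ⊗ w_{m+j}`. -/
noncomputable def tact (α β : ℂ) (m : ℤ) : ((ℤ × ℤ) →₀ ℂ) →ₗ[ℂ] ((ℤ × ℤ) →₀ ℂ) :=
  Finsupp.lsum ℂ fun p => LinearMap.toSpanSingleton ℂ ((ℤ × ℤ) →₀ ℂ)
    ((-((p.1 : ℂ) + α * m)) • Finsupp.single (m + p.1, p.2) (1 : ℂ)
      + (-((p.2 : ℂ) + β * m)) • Finsupp.single (p.1, m + p.2) (1 : ℂ))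

/-- A family `d n = d(L_n)` is a 1-cocycle of the Witt algebra with
coefficients in `𝓕_α ⊗ 𝓕_β`: `d([L_m, L_n]) = L_m · d(L_n) - L_n · d(L_m)`. -/
def IsCocycle (α β : ℂ) (d : ℤ → ((ℤ × ℤ) →₀ ℂ)) : Prop :=
  ∀ m n : ℤ, ((m - n : ℤ) : ℂ) • d (m + n) = tact α β m (d n) - tact α β n (d m)

/-- `d` is a 1-coboundary: `d(L_n) = L_n · u` for a fixed `u` in the module. -/
def IsCoboundary (α β : ℂ) (d : ℤ → ((ℤ × ℤ) →₀ ℂ)) : Prop :=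
  ∃ u : (ℤ × ℤ) →₀ ℂ, ∀ n : ℤ, d n = tact α β n u

open Filter

lemma tact_single (α β : ℂ) (m : ℤ) (p : ℤ × ℤ) (c : ℂ) :
    tact α β m (Finsupp.single p c) =
      c • ((-((p.1 : ℂ) + α * m)) • Finsupp.single (m + p.1, p.2) (1 : ℂ)
        + (-((p.2 : ℂ) + β * m)) • Finsupp.single (p.1, m + p.2) (1 : ℂ)) := by
  simp [tact, LinearMap.toSpanSingleton_apply]

lemma tact_apply (α β : ℂ) (m : ℤ) (u : (ℤ × ℤ) →₀ ℂ) (i j : ℤ) :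
    tact α β m u (i, j) =
      -(((i - m : ℤ) : ℂ) + α * m) * u (i - m, j) - (((j - m : ℤ) : ℂ) + β * m) * u (i, j - m) := by
  induction u using Finsupp.induction_linear with
  | zero => simp
  | add f g hf hg => simp only [map_add, Finsupp.add_apply, hf, hg]; ring
  | single p c =>
    obtain ⟨k, l⟩ := p
    have shift₁ : (m + k = i ∧ l = j) ↔ (k = i - m ∧ l = j) := by omega
    have shift₂ : (k = i ∧ m + l = j) ↔ (k = i ∧ l = j - m) := by omega
    simp only [tact_single, Finsupp.smul_apply, Finsupp.add_apply, Finsupp.single_apply,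
      Prod.mk.injEq, smul_eq_mul, shift₁, shift₂]
    by_cases hA : k = i - m ∧ l = j <;> by_cases hB : k = i ∧ l = j - m
    · simp only [if_pos hA, if_pos hB]; rw [hA.1, hB.2]; push_cast; ring
    · simp only [if_pos hA, if_neg hB]; rw [hA.1]; push_cast; ring
    · simp only [if_neg hA, if_pos hB]; rw [hB.2]; push_cast; ring
    · simp only [if_neg hA, if_neg hB]; ring

theorem Finsupp.eventually_cofinite_apply_comp_eq_zero {α β M : Type*} [Zero M] (f : α →₀ M)
    {g : β → α} (hg : g.Injective) : ∀ᶠ b in cofinite, f (g b) = 0 :=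
  eventually_cofinite.2 (f.hasFiniteSupport.preimage hg.injOn)

theorem not_eventually_cube_eq_mul {K : Type*} [Field K] [CharZero K] (a : K) :
    ¬ ∀ᶠ n : ℤ in atTop, (n : K) ^ 3 = a * n := by
  intro h
  obtain ⟨N, hN⟩ := (h.and (eventually_gt_atTop 0)).exists_forall_of_atTop
  have hsq : ∀ n ≥ N, (n : K) ^ 2 = a := fun n hn => by
    obtain ⟨hcube, hpos⟩ := hN n hn
    have hn0 : (n : K) ≠ 0 := by exact_mod_cast hpos.ne'
    exact mul_left_cancel₀ hn0 (by linear_combination hcube)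
  have hodd : ((2 * N + 1 : ℤ) : K) = 0 := by
    linear_combination (norm := (push_cast; ring)) hsq (N + 1) (by omega) - hsq N le_rfl
  have : 2 * N + 1 = 0 := by exact_mod_cast hodd
  omega

theorem isCocycle_zero_two_cube :
    IsCocycle 0 2 (fun n => ((n : ℂ) ^ 3) • Finsupp.single ((0 : ℤ), n) (1 : ℂ)) := by
  intro m n
  simp only [map_smul, tact_single, Int.cast_zero, zero_mul, add_zero, neg_zero, zero_smul,
    zero_add, smul_smul, add_comm n m, ← sub_smul]
  congr 1
  push_cast
  ring

theorem not_isCoboundary_zero_two_cube :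
    ¬ IsCoboundary 0 2 (fun n => ((n : ℂ) ^ 3) • Finsupp.single ((0 : ℤ), n) (1 : ℂ)) := by
  rintro ⟨u, hu⟩
  have hcoeff (n : ℤ) : (n : ℂ) ^ 3 = n * u (-n, n) - 2 * n * u (0, 0) := by
    simpa [tact_apply] using congr($(hu n) (0, n))
  have hdiag : ∀ᶠ n : ℤ in atTop, u (-n, n) = 0 :=
    atTop_le_cofinite <| u.eventually_cofinite_apply_comp_eq_zero
      (g := fun n => (-n, n)) fun _ _ h => congr_arg Prod.snd h
  refine not_eventually_cube_eq_mul (-2 * u (0, 0)) ?_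
  filter_upwards [hdiag] with n hn
  rw [hcoeff n, hn]
  ring

/-- the map `δ_{0,2}(L_n) = n³ v_0 ⊗ w_n` is a 1-cocycle of the
Witt algebra with coefficients in `𝓕_0 ⊗ 𝓕_2`, and not a 1-coboundary. -/
theorem d02cube_cocycle_not_coboundary :
    IsCocycle 0 2 (fun n => ((n : ℂ) ^ 3) • Finsupp.single ((0 : ℤ), n) (1 : ℂ)) ∧
    ¬ IsCoboundary 0 2 (fun n => ((n : ℂ) ^ 3) • Finsupp.single ((0 : ℤ), n) (1 : ℂ)) :=
  ⟨isCocycle_zero_two_cube, not_isCoboundary_zero_two_cube⟩
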